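/- arXiv:2204.04690 — 5 statements merged into one kernel-verified Lean document; each statement's English description precedes it below -/
import Mathlib

section
/- Let $0 \leq X \leq Y$ be nonnegative random variables and suppose there are constants $a,b > 1$ such that $\lambda^{-1}\int_{\{Y > \lambda\}} X\, d\mathbb{P} \leq b\, \mathbb{P}(Y \geq \lambda)$ for all $\lambda > a$. If $\mathbb{E}[Y] < \infty$, then $\mathbb{E}[X \log^+ X] < \infty$; in fact $\mathbb{E}[X\log^+ X] \leq \log(a)\,\mathbb{E}[X] + b\,\mathbb{E}[Y]$. -/
/-!
Writing `x log⁺ x = ∫_{1 < l < x} x / l dl`, Tonelli gives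
`E[X log⁺ X] = ∫_{l > 1} l⁻¹ E[X; X > l] dl`. On `(1, a]` the integrand is at most `l⁻¹ E[X]`,
which integrates to `log a · E[X]`. On `(a, ∞)` we have `{X > l} ⊆ {Y > l}`, so the hypothesis
bounds the integrand by `b P(Y ≥ l)`, whose integral is at most `b E[Y]` by the layer-cake formula.
-/

open MeasureTheory Set
open scoped ENNReal

theorem lintegral_Ioc_ofReal_inv {c d : ℝ} (hc : 0 < c) (hcd : c ≤ d) :
    ∫⁻ l in Ioc c d, ENNReal.ofReal l⁻¹ = ENNReal.ofReal (Real.log (d / c)) := by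
  have hint : IntegrableOn (fun l : ℝ => l⁻¹) (Ioc c d) :=
    ((continuousOn_inv₀.mono fun l hl => (hc.trans_le hl.1).ne').integrableOn_Icc).mono_set
      Ioc_subset_Icc_self
  rw [← ofReal_integral_eq_lintegral_ofReal hint
      (ae_restrict_of_forall_mem measurableSet_Ioc fun l hl => inv_nonneg.2 (hc.trans hl.1).le),
    ← intervalIntegral.integral_of_le hcd, integral_inv_of_pos hc (hc.trans_le hcd)]

theorem ofReal_mul_max_log_eq_lintegral_Ioo (x : ℝ) :
    ENNReal.ofReal (x * max (Real.log x) 0) = ∫⁻ l in Ioo 1 x, ENNReal.ofReal (x / l) := by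
  rcases le_or_gt x 1 with hx | hx
  · rw [Ioo_eq_empty hx.not_gt, Measure.restrict_empty, lintegral_zero_measure,
      ENNReal.ofReal_eq_zero]
    rcases le_total x 0 with hx0 | hx0
    · exact mul_nonpos_of_nonpos_of_nonneg hx0 (le_max_right _ _)
    · simp [Real.log_nonpos hx0 hx]
  · simp_rw [div_eq_mul_inv, ENNReal.ofReal_mul (zero_le_one.trans hx.le)]
    rw [Measure.restrict_congr_set Ioo_ae_eq_Ioc, lintegral_const_mul' _ _ ENNReal.ofReal_ne_top,
      lintegral_Ioc_ofReal_inv one_pos hx.le, div_one, max_eq_left (Real.log_nonneg hx.le)]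

section

variable {Ω : Type*} [MeasurableSpace Ω] (μ : Measure Ω)

theorem lintegral_ofReal_mul_max_log_eq [SFinite μ] {X : Ω → ℝ} (hX : Measurable X) :
    ∫⁻ ω, ENNReal.ofReal (X ω * max (Real.log (X ω)) 0) ∂μ =
      ∫⁻ l in Ioi 1, (ENNReal.ofReal l)⁻¹ * ∫⁻ ω in {ω | l < X ω}, ENNReal.ofReal (X ω) ∂μ := by
  set F : ℝ → Ω → ℝ≥0∞ := fun l ω => if l < X ω then ENNReal.ofReal (X ω / l) else 0
  have hF : Measurable (Function.uncurry F) :=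
    Measurable.ite (measurableSet_lt measurable_fst (hX.comp measurable_snd)) (by fun_prop)
      measurable_const
  have hpoint : ∀ ω, ENNReal.ofReal (X ω * max (Real.log (X ω)) 0) = ∫⁻ l in Ioi 1, F l ω := by
    intro ω
    rw [ofReal_mul_max_log_eq_lintegral_Ioo, ← Iio_inter_Ioi,
      ← Measure.restrict_restrict measurableSet_Iio, ← lintegral_indicator measurableSet_Iio]
    rfl
  have hinner : ∀ l ∈ Ioi (1 : ℝ), ∫⁻ ω, F l ω ∂μ =
      (ENNReal.ofReal l)⁻¹ * ∫⁻ ω in {ω | l < X ω}, ENNReal.ofReal (X ω) ∂μ := by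
    intro l hl
    have hl0 : 0 < l := zero_lt_one.trans hl
    rw [mul_comm, ← lintegral_mul_const' _ _ (ENNReal.inv_ne_top.2 (ENNReal.ofReal_pos.2 hl0).ne'),
      ← lintegral_indicator (measurableSet_lt measurable_const hX)]
    congr 1
    ext ω
    simp only [F, indicator_apply, mem_ofPred_eq]
    rw [ENNReal.ofReal_div_of_pos hl0, div_eq_mul_inv]
  rw [lintegral_congr hpoint,
    lintegral_lintegral_swap (f := fun ω l => F l ω) (hF.comp measurable_swap).aemeasurable]
  exact setLIntegral_congr_fun measurableSet_Ioi hinner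

theorem lintegral_ofReal_eq_lintegral_meas_le {Y : Ω → ℝ} (hY : Measurable Y) :
    ∫⁻ ω, ENNReal.ofReal (Y ω) ∂μ = ∫⁻ t in Ioi 0, μ {ω | t ≤ Y ω} := by
  have hmax : ∀ ω, ENNReal.ofReal (Y ω) = ENNReal.ofReal (max (Y ω) 0) := fun ω => by
    simp [ENNReal.ofReal_max]
  have hpos : ∀ t ∈ Ioi (0 : ℝ), μ {ω | t ≤ max (Y ω) 0} = μ {ω | t ≤ Y ω} := fun t ht => by
    simp [not_le.2 (mem_Ioi.1 ht)]
  rw [lintegral_congr hmax, lintegral_eq_lintegral_meas_le (f := fun ω => max (Y ω) 0) μ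
    (ae_of_all _ fun _ => le_max_right _ _) (hY.max measurable_const).aemeasurable]
  exact setLIntegral_congr_fun measurableSet_Ioi hpos

theorem lintegral_Ioc_inv_mul_setLIntegral_le (X : Ω → ℝ) {c : ℝ} (hc : 1 ≤ c) :
    ∫⁻ l in Ioc 1 c, (ENNReal.ofReal l)⁻¹ * ∫⁻ ω in {ω | l < X ω}, ENNReal.ofReal (X ω) ∂μ ≤
      ENNReal.ofReal (Real.log c) * ∫⁻ ω, ENNReal.ofReal (X ω) ∂μ :=
  calc _ ≤ ∫⁻ l in Ioc 1 c, ENNReal.ofReal l⁻¹ * ∫⁻ ω, ENNReal.ofReal (X ω) ∂μ :=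
        setLIntegral_mono' measurableSet_Ioc fun l hl => by
          rw [ENNReal.ofReal_inv_of_pos (zero_lt_one.trans hl.1)]
          gcongr
          exact Measure.restrict_le_self
    _ = _ := by
      rw [lintegral_mul_const _ measurable_inv.ennreal_ofReal,
        lintegral_Ioc_ofReal_inv one_pos hc, div_one]

end

theorem converse_LlogL_general {Ω : Type*} [MeasurableSpace Ω] (μ : Measure Ω)
    [IsProbabilityMeasure μ]
    (X Y : Ω → ℝ) (hX : Measurable X) (hY : Measurable Y)
    (hXY : ∀ ω, X ω ≤ Y ω)
    (a b : ℝ) (ha : 1 < a)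
    (h : ∀ l : ℝ, a < l →
      (ENNReal.ofReal l)⁻¹ * ∫⁻ ω in {ω | l < Y ω}, ENNReal.ofReal (X ω) ∂μ ≤
        ENNReal.ofReal b * μ {ω | l ≤ Y ω})
    (hYfin : ∫⁻ ω, ENNReal.ofReal (Y ω) ∂μ < ⊤) :
    (∫⁻ ω, ENNReal.ofReal (X ω * max (Real.log (X ω)) 0) ∂μ < ⊤) ∧
    ∫⁻ ω, ENNReal.ofReal (X ω * max (Real.log (X ω)) 0) ∂μ ≤
      ENNReal.ofReal (Real.log a) * ∫⁻ ω, ENNReal.ofReal (X ω) ∂μ +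
        ENNReal.ofReal b * ∫⁻ ω, ENNReal.ofReal (Y ω) ∂μ := by
  have hXfin : ∫⁻ ω, ENNReal.ofReal (X ω) ∂μ < ⊤ :=
    (lintegral_mono fun ω => ENNReal.ofReal_le_ofReal (hXY ω)).trans_lt hYfin
  have hbound : ∫⁻ ω, ENNReal.ofReal (X ω * max (Real.log (X ω)) 0) ∂μ ≤
      ENNReal.ofReal (Real.log a) * ∫⁻ ω, ENNReal.ofReal (X ω) ∂μ +
        ENNReal.ofReal b * ∫⁻ ω, ENNReal.ofReal (Y ω) ∂μ := by
    rw [lintegral_ofReal_mul_max_log_eq μ hX, ← Ioc_union_Ioi_eq_Ioi ha.le,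
      lintegral_union measurableSet_Ioi (Ioc_disjoint_Ioi le_rfl)]
    gcongr ?_ + ?_
    · exact lintegral_Ioc_inv_mul_setLIntegral_le μ X ha.le
    · calc _ ≤ ∫⁻ l in Ioi a, ENNReal.ofReal b * μ {ω | l ≤ Y ω} :=
            setLIntegral_mono' measurableSet_Ioi fun l hl => le_trans (by
              gcongr
              exact hXY _) (h l hl)
        _ ≤ ENNReal.ofReal b * ∫⁻ ω, ENNReal.ofReal (Y ω) ∂μ := by
          rw [lintegral_const_mul' _ _ ENNReal.ofReal_ne_top]
          gcongr
          rw [lintegral_ofReal_eq_lintegral_meas_le μ hY]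
          exact lintegral_mono_set (Ioi_subset_Ioi (zero_le_one.trans ha.le))
  refine ⟨hbound.trans_lt ?_, hbound⟩
  exact ENNReal.add_lt_top.2 ⟨ENNReal.mul_lt_top ENNReal.ofReal_lt_top hXfin,
    ENNReal.mul_lt_top ENNReal.ofReal_lt_top hYfin⟩

/-- Converse `L log L` inequality: if `0 ≤ X ≤ Y`,
`λ⁻¹ ∫_{Y > λ} X dP ≤ b P(Y ≥ λ)` for all `λ > a` (with `a, b > 1`), and
`E[Y] < ∞`, then `E[X log⁺ X] < ∞`; in fact
`E[X log⁺ X] ≤ log a · E[X] + b · E[Y]`. -/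
theorem converse_LlogL {Ω : Type*} [MeasurableSpace Ω] (μ : Measure Ω)
    [IsProbabilityMeasure μ]
    (X Y : Ω → ℝ) (hX : Measurable X) (hY : Measurable Y)
    (hX0 : ∀ ω, 0 ≤ X ω) (hXY : ∀ ω, X ω ≤ Y ω)
    (a b : ℝ) (ha : 1 < a) (hb : 1 < b)
    (h : ∀ l : ℝ, a < l →
      (ENNReal.ofReal l)⁻¹ * ∫⁻ ω in {ω | l < Y ω}, ENNReal.ofReal (X ω) ∂μ ≤
        ENNReal.ofReal b * μ {ω | l ≤ Y ω})
    (hYfin : ∫⁻ ω, ENNReal.ofReal (Y ω) ∂μ < ⊤) :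
    (∫⁻ ω, ENNReal.ofReal (X ω * max (Real.log (X ω)) 0) ∂μ < ⊤) ∧
    ∫⁻ ω, ENNReal.ofReal (X ω * max (Real.log (X ω)) 0) ∂μ ≤
      ENNReal.ofReal (Real.log a) * ∫⁻ ω, ENNReal.ofReal (X ω) ∂μ +
        ENNReal.ofReal b * ∫⁻ ω, ENNReal.ofReal (Y ω) ∂μ :=
  converse_LlogL_general μ X Y hX hY hXY a b ha h hYfin
end

section
/- Let $0 < p < \infty$ and let $X,Y \geq 0$ be nonnegative random variables with $X$ bounded. Suppose there exist $\beta > 1$, $\delta \in (0,1)$ and $0 < \epsilon < \frac{1}{2}\beta^{-p}$ such that $\mathbb{P}(X > \beta\lambda,\ Y < \delta\lambda) \leq \epsilon\, \mathbb{P}(X \geq \lambda)$ for all $\lambda > 0$. Then $\mathbb{E}[X^p] \leq \frac{2\beta^p}{\delta^p}\, \mathbb{E}[Y^p]$. -/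
/-!
Integrate the pointwise bound `P(X > t) ≤ ε P(βX ≥ t) + P((β/δ) Y ≥ t)`, which is the hypothesis at
`λ = t/β`, against `p t^(p-1) dt`. By the layer-cake formula this gives
`E[X^p] ≤ ε β^p E[X^p] + (β/δ)^p E[Y^p]`, and since `ε β^p < 1/2` and `E[X^p] < ∞` (`X` is bounded),
the first term can be absorbed into the left-hand side.
-/

open MeasureTheory Set
open scoped ENNReal

theorem ENNReal.le_two_mul_of_le_mul_add {a b c : ℝ≥0∞} (ha : a ≠ ∞) (hc : c ≤ 2⁻¹)
    (h : a ≤ c * a + b) : a ≤ 2 * b := by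
  have half_le : a / 2 ≤ b := by
    rw [← ENNReal.sub_half ha, tsub_le_iff_left, ENNReal.div_eq_inv_mul]
    exact h.trans (add_le_add_left (mul_le_mul_left hc a) b)
  calc a = 2 * (a / 2) := (ENNReal.mul_div_cancel two_ne_zero ENNReal.ofNat_ne_top).symm
    _ ≤ 2 * b := mul_le_mul_right half_le 2

section

variable {Ω : Type*} [MeasurableSpace Ω] (μ : Measure Ω)

theorem lintegral_ofReal_const_mul_rpow {f : Ω → ℝ} (hf : ∀ ω, 0 ≤ f ω) {c : ℝ} (hc : 0 ≤ c)
    (p : ℝ) :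
    ∫⁻ ω, ENNReal.ofReal ((c * f ω) ^ p) ∂μ =
      ENNReal.ofReal (c ^ p) * ∫⁻ ω, ENNReal.ofReal (f ω ^ p) ∂μ := by
  rw [← lintegral_const_mul' _ _ ENNReal.ofReal_ne_top]
  refine lintegral_congr fun ω => ?_
  rw [Real.mul_rpow hc (hf ω), ENNReal.ofReal_mul (Real.rpow_nonneg hc p)]

theorem measurable_meas_le_mul_rpow (f : Ω → ℝ) (q : ℝ) :
    Measurable fun t : ℝ => μ {ω | t ≤ f ω} * ENNReal.ofReal (t ^ q) :=
  (Antitone.measurable (f := fun t : ℝ => μ {ω | t ≤ f ω})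
    fun _ _ hst => measure_mono fun _ hω => hst.trans hω).mul
      (measurable_id.pow_const q).ennreal_ofReal

theorem lintegral_ofReal_rpow_ne_top_of_le [IsFiniteMeasure μ] {f : Ω → ℝ} (hf : ∀ ω, 0 ≤ f ω)
    {C : ℝ} (hfC : ∀ ω, f ω ≤ C) {p : ℝ} (hp : 0 ≤ p) :
    ∫⁻ ω, ENNReal.ofReal (f ω ^ p) ∂μ ≠ ∞ := by
  refine ne_top_of_le_ne_top (ENNReal.mul_ne_top ENNReal.ofReal_ne_top (measure_ne_top μ univ))
    ((lintegral_mono fun ω => ?_).trans_eq (lintegral_const (ENNReal.ofReal (C ^ p))))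
  exact ENNReal.ofReal_le_ofReal (Real.rpow_le_rpow (hf ω) (hfC ω) hp)

theorem lintegral_rpow_le_of_meas_lt_le {f g h : Ω → ℝ} (hf : 0 ≤ᵐ[μ] f) (hg : 0 ≤ᵐ[μ] g)
    (hh : 0 ≤ᵐ[μ] h) (hf_meas : AEMeasurable f μ) (hg_meas : AEMeasurable g μ)
    (hh_meas : AEMeasurable h μ) {p : ℝ} (hp : 0 < p) (a : ℝ≥0∞)
    (htail : ∀ t > 0, μ {ω | t < f ω} ≤ a * μ {ω | t ≤ g ω} + μ {ω | t ≤ h ω}) :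
    ∫⁻ ω, ENNReal.ofReal (f ω ^ p) ∂μ ≤
      a * ∫⁻ ω, ENNReal.ofReal (g ω ^ p) ∂μ + ∫⁻ ω, ENNReal.ofReal (h ω ^ p) ∂μ := by
  rw [lintegral_rpow_eq_lintegral_meas_lt_mul μ hf hf_meas hp,
    lintegral_rpow_eq_lintegral_meas_le_mul μ hg hg_meas hp,
    lintegral_rpow_eq_lintegral_meas_le_mul μ hh hh_meas hp]
  calc ENNReal.ofReal p * ∫⁻ t in Ioi 0, μ {ω | t < f ω} * ENNReal.ofReal (t ^ (p - 1))
      ≤ ENNReal.ofReal p * ∫⁻ t in Ioi 0, a * (μ {ω | t ≤ g ω} * ENNReal.ofReal (t ^ (p - 1))) +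
          μ {ω | t ≤ h ω} * ENNReal.ofReal (t ^ (p - 1)) := by
        refine mul_le_mul_right (setLIntegral_mono' measurableSet_Ioi fun t ht => ?_) _
        rw [← mul_assoc, ← add_mul]
        exact mul_le_mul_left (htail t ht) _
    _ = _ := by
        rw [lintegral_add_right _ (measurable_meas_le_mul_rpow μ h (p - 1)),
          lintegral_const_mul _ (measurable_meas_le_mul_rpow μ g (p - 1))]
        ring

/-- The good-λ hypothesis at `λ = t / β`. -/
theorem meas_lt_le_of_good_lambda {X Y : Ω → ℝ} {β δ : ℝ} (hβ : 0 < β) (hδ : 0 < δ) (a : ℝ≥0∞)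
    (h : ∀ l : ℝ, 0 < l → μ {ω | β * l < X ω ∧ Y ω < δ * l} ≤ a * μ {ω | l ≤ X ω})
    {t : ℝ} (ht : 0 < t) :
    μ {ω | t < X ω} ≤ a * μ {ω | t ≤ β * X ω} + μ {ω | t ≤ β / δ * Y ω} := by
  have hsplit : {ω | t < X ω} ⊆
      {ω | β * (t / β) < X ω ∧ Y ω < δ * (t / β)} ∪ {ω | t ≤ β / δ * Y ω} := by
    intro ω hω
    by_cases hY : Y ω < δ * (t / β)
    · exact Or.inl ⟨by rwa [mul_div_cancel₀ t hβ.ne'], hY⟩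
    · right
      have hscale : t = β / δ * (δ * (t / β)) := by field_simp
      exact hscale.trans_le (mul_le_mul_of_nonneg_left (not_lt.mp hY) (by positivity))
  have hlevel : {ω | t / β ≤ X ω} = {ω | t ≤ β * X ω} := by
    ext ω
    simp only [mem_ofPred_eq, div_le_iff₀' hβ]
  calc μ {ω | t < X ω}
      ≤ μ {ω | β * (t / β) < X ω ∧ Y ω < δ * (t / β)} + μ {ω | t ≤ β / δ * Y ω} :=
        (measure_mono hsplit).trans (measure_union_le _ _)
    _ ≤ a * μ {ω | t ≤ β * X ω} + μ {ω | t ≤ β / δ * Y ω} := by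
        rw [← hlevel]
        exact add_le_add_left (h _ (div_pos ht hβ)) _

end

theorem good_lambda_inequality_general {Ω : Type*} [MeasurableSpace Ω] (μ : Measure Ω)
    [IsProbabilityMeasure μ]
    (X Y : Ω → ℝ) (hX : Measurable X) (hY : Measurable Y)
    (hX0 : ∀ ω, 0 ≤ X ω) (hY0 : ∀ ω, 0 ≤ Y ω)
    (C : ℝ) (hXbd : ∀ ω, X ω ≤ C)
    (p : ℝ) (hp : 0 < p)
    (β δ ε : ℝ) (hβ : 1 < β) (hδ0 : 0 < δ)
    (hε : ε < (1 / 2) * β ^ (-p))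
    (h : ∀ l : ℝ, 0 < l →
      μ {ω | β * l < X ω ∧ Y ω < δ * l} ≤ ENNReal.ofReal ε * μ {ω | l ≤ X ω}) :
    ∫⁻ ω, ENNReal.ofReal (X ω ^ p) ∂μ ≤
      ENNReal.ofReal (2 * β ^ p / δ ^ p) * ∫⁻ ω, ENNReal.ofReal (Y ω ^ p) ∂μ := by
  have hβ0 : 0 < β := one_pos.trans hβ
  have hβδ : 0 < β / δ := div_pos hβ0 hδ0
  have hmoment := lintegral_rpow_le_of_meas_lt_le μ (.of_forall hX0)
    (.of_forall fun ω => mul_nonneg hβ0.le (hX0 ω))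
    (.of_forall fun ω => mul_nonneg hβδ.le (hY0 ω))
    hX.aemeasurable (hX.aemeasurable.const_mul β) (hY.aemeasurable.const_mul (β / δ)) hp _
    fun t ht => meas_lt_le_of_good_lambda μ hβ0 hδ0 _ h ht
  rw [lintegral_ofReal_const_mul_rpow μ hX0 hβ0.le, lintegral_ofReal_const_mul_rpow μ hY0 hβδ.le,
    ← mul_assoc, ← ENNReal.ofReal_mul' (Real.rpow_nonneg hβ0.le p)] at hmoment
  have habsorb : ENNReal.ofReal (ε * β ^ p) ≤ 2⁻¹ := by
    rw [← ENNReal.ofReal_ofNat, ← ENNReal.ofReal_inv_of_pos two_pos]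
    refine ENNReal.ofReal_le_ofReal (le_of_lt ?_)
    have := mul_lt_mul_of_pos_right hε (Real.rpow_pos_of_pos hβ0 p)
    rwa [mul_assoc, ← Real.rpow_add hβ0, neg_add_cancel, Real.rpow_zero, mul_one, one_div] at this
  calc _ ≤ 2 * (ENNReal.ofReal ((β / δ) ^ p) * ∫⁻ ω, ENNReal.ofReal (Y ω ^ p) ∂μ) :=
        ENNReal.le_two_mul_of_le_mul_add
          (lintegral_ofReal_rpow_ne_top_of_le μ hX0 hXbd hp.le) habsorb hmoment
    _ = _ := by
        rw [← mul_assoc, Real.div_rpow hβ0.le hδ0.le, mul_div_assoc,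
          ENNReal.ofReal_mul zero_le_two, ENNReal.ofReal_ofNat]

/-- Burkholder's good-λ inequality: if `X` is bounded and
`P(X > βλ, Y < δλ) ≤ ε P(X ≥ λ)` for all `λ > 0` with `β > 1`, `δ ∈ (0,1)`,
`0 < ε < β^{-p}/2`, then `E[X^p] ≤ (2 β^p / δ^p) E[Y^p]`. -/
theorem good_lambda_inequality {Ω : Type*} [MeasurableSpace Ω] (μ : Measure Ω)
    [IsProbabilityMeasure μ]
    (X Y : Ω → ℝ) (hX : Measurable X) (hY : Measurable Y)
    (hX0 : ∀ ω, 0 ≤ X ω) (hY0 : ∀ ω, 0 ≤ Y ω)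
    (C : ℝ) (hXbd : ∀ ω, X ω ≤ C)
    (p : ℝ) (hp : 0 < p)
    (β δ ε : ℝ) (hβ : 1 < β) (hδ0 : 0 < δ) (hδ1 : δ < 1)
    (hε0 : 0 < ε) (hε : ε < (1 / 2) * β ^ (-p))
    (h : ∀ l : ℝ, 0 < l →
      μ {ω | β * l < X ω ∧ Y ω < δ * l} ≤ ENNReal.ofReal ε * μ {ω | l ≤ X ω}) :
    ∫⁻ ω, ENNReal.ofReal (X ω ^ p) ∂μ ≤
      ENNReal.ofReal (2 * β ^ p / δ ^ p) * ∫⁻ ω, ENNReal.ofReal (Y ω ^ p) ∂μ :=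
  good_lambda_inequality_general μ X Y hX hY hX0 hY0 C hXbd p hp β δ ε hβ hδ0 hε h
end

section
/- Let $X,Y \geq 0$ be nonnegative random variables and $r > 0$ such that $\mathbb{P}(X > \lambda,\ Y < \lambda) \leq \lambda^{-r}\int_{\{Y < \lambda\}} Y^r\, d\mathbb{P}$ for all $\lambda > 0$. Then for all $0 < p < r$, $\mathbb{E}[X^p] \leq \frac{r}{r-p}\, \mathbb{E}[Y^p]$. -/
open MeasureTheory Set
open scoped ENNReal

/-!
By the layer-cake formula, `E[X^p] = p ∫₀^∞ t^(p-1) P(X > t) dt`. Split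
`{X > t} ⊆ {X > t, Y < t} ∪ {Y ≥ t}`: the second piece contributes exactly `E[Y^p]`, and on the
first the hypothesis followed by Tonelli gives
`p ∫ Y^r ∫_Y^∞ t^(p-1-r) dt dP = p/(r-p) E[Y^p]`. Finally `1 + p/(r-p) = r/(r-p)`.
-/

theorem lintegral_Ioi_rpow_mul_rpow {y p r : ℝ} (hy : 0 ≤ y) (hp : 0 < p) (hpr : p < r) :
    ∫⁻ t in Ioi y, ENNReal.ofReal (t ^ (p - 1 - r) * y ^ r) =
      ENNReal.ofReal (y ^ p / (r - p)) := by
  rcases hy.eq_or_lt with rfl | hy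
  · simp [Real.zero_rpow hp.ne', Real.zero_rpow (hp.trans hpr).ne']
  have hexp : p - 1 - r < -1 := by linarith
  rw [← ofReal_integral_eq_lintegral_ofReal
      ((integrableOn_Ioi_rpow_of_lt hexp hy).mul_const _)
      ((ae_restrict_iff' measurableSet_Ioi).2 (ae_of_all _ fun t ht =>
        by have := hy.trans ht; positivity)),
    integral_mul_const, integral_Ioi_rpow_of_lt hexp hy]
  congr 1
  rw [show p - 1 - r + 1 = p - r by ring, neg_div, ← div_neg, neg_sub, div_mul_eq_mul_div,
    ← Real.rpow_add hy, sub_add_cancel]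

theorem lintegral_Ioi_rpow_mul_setLIntegral_rpow_lt {Ω : Type*} [MeasurableSpace Ω]
    (μ : Measure Ω) [SFinite μ] {Y : Ω → ℝ} (hY : Measurable Y) (hY0 : ∀ ω, 0 ≤ Y ω)
    {p r : ℝ} (hp : 0 < p) (hpr : p < r) :
    ∫⁻ t in Ioi 0, ENNReal.ofReal (t ^ (-r)) *
        (∫⁻ ω in {ω | Y ω < t}, ENNReal.ofReal (Y ω ^ r) ∂μ) * ENNReal.ofReal (t ^ (p - 1)) =
      ENNReal.ofReal (1 / (r - p)) * ∫⁻ ω, ENNReal.ofReal (Y ω ^ p) ∂μ := by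
  set F : ℝ → Ω → ℝ≥0∞ := fun t ω =>
    (Ioi (Y ω)).indicator (fun s => ENNReal.ofReal (s ^ (p - 1 - r) * Y ω ^ r)) t
  have hF : Measurable (Function.uncurry F) :=
    Measurable.ite (measurableSet_lt (hY.comp measurable_snd) measurable_fst) (by fun_prop)
      measurable_const
  have hinner : ∀ t > 0, ENNReal.ofReal (t ^ (-r)) *
      (∫⁻ ω in {ω | Y ω < t}, ENNReal.ofReal (Y ω ^ r) ∂μ) * ENNReal.ofReal (t ^ (p - 1)) =
      ∫⁻ ω, F t ω ∂μ := by
    intro t ht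
    rw [mul_right_comm, ← ENNReal.ofReal_mul (by positivity), ← Real.rpow_add ht,
      ← lintegral_const_mul _ (by fun_prop),
      ← lintegral_indicator (measurableSet_lt hY measurable_const)]
    refine lintegral_congr fun ω => ?_
    dsimp only [F]
    by_cases hω : Y ω < t
    · rw [indicator_of_mem (s := {ω | Y ω < t}) hω, indicator_of_mem (s := Ioi (Y ω)) hω,
        ← ENNReal.ofReal_mul (by positivity), neg_add_eq_sub]
    · simp [hω]
  calc _ = ∫⁻ t in Ioi 0, ∫⁻ ω, F t ω ∂μ := setLIntegral_congr_fun measurableSet_Ioi hinner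
    _ = ∫⁻ ω, (∫⁻ t in Ioi 0, F t ω) ∂μ := lintegral_lintegral_swap hF.aemeasurable
    _ = ∫⁻ ω, ENNReal.ofReal (1 / (r - p)) * ENNReal.ofReal (Y ω ^ p) ∂μ := by
      refine lintegral_congr fun ω => ?_
      rw [setLIntegral_indicator measurableSet_Ioi, Ioi_inter_Ioi, sup_eq_left.2 (hY0 ω),
        lintegral_Ioi_rpow_mul_rpow (hY0 ω) hp hpr,
        ← ENNReal.ofReal_mul (one_div_pos.2 (sub_pos.2 hpr)).le, one_div_mul_eq_div]
    _ = _ := lintegral_const_mul _ (by fun_prop)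

theorem lintegral_rpow_le_lintegral_meas_lt_and_lt_add {Ω : Type*} [MeasurableSpace Ω]
    (μ : Measure Ω) {X Y : Ω → ℝ} (hX : AEMeasurable X μ) (hY : AEMeasurable Y μ)
    (hX0 : 0 ≤ᵐ[μ] X) (hY0 : 0 ≤ᵐ[μ] Y) {p : ℝ} (hp : 0 < p) :
    ∫⁻ ω, ENNReal.ofReal (X ω ^ p) ∂μ ≤
      ENNReal.ofReal p *
          (∫⁻ t in Ioi 0, μ {ω | t < X ω ∧ Y ω < t} * ENNReal.ofReal (t ^ (p - 1))) +
        ∫⁻ ω, ENNReal.ofReal (Y ω ^ p) ∂μ := by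
  have hsplit : ∀ t : ℝ, μ {ω | t < X ω} ≤ μ {ω | t < X ω ∧ Y ω < t} + μ {ω | t ≤ Y ω} :=
    fun t => (measure_mono fun ω hω => (lt_or_ge (Y ω) t).imp (⟨hω, ·⟩) id).trans
      (measure_union_le _ _)
  have hYtail : Measurable fun t : ℝ => μ {ω | t ≤ Y ω} * ENNReal.ofReal (t ^ (p - 1)) :=
    .mul (Antitone.measurable fun s t hst => measure_mono fun ω hω => hst.trans hω)
      (by fun_prop)
  rw [lintegral_rpow_eq_lintegral_meas_lt_mul μ hX0 hX hp,
    lintegral_rpow_eq_lintegral_meas_le_mul μ hY0 hY hp, ← mul_add,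
    ← lintegral_add_right _ hYtail]
  gcongr with t
  rw [← add_mul]
  exact mul_le_mul_left (hsplit t) _

theorem good_lambda_interpolation_general {Ω : Type*} [MeasurableSpace Ω] (μ : Measure Ω)
    [IsProbabilityMeasure μ]
    (X Y : Ω → ℝ) (hX : Measurable X) (hY : Measurable Y)
    (hX0 : ∀ ω, 0 ≤ X ω) (hY0 : ∀ ω, 0 ≤ Y ω)
    (r : ℝ)
    (h : ∀ l : ℝ, 0 < l →
      μ {ω | l < X ω ∧ Y ω < l} ≤
        ENNReal.ofReal (l ^ (-r)) * ∫⁻ ω in {ω | Y ω < l}, ENNReal.ofReal (Y ω ^ r) ∂μ) :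
    ∀ p : ℝ, 0 < p → p < r →
      ∫⁻ ω, ENNReal.ofReal (X ω ^ p) ∂μ ≤
        ENNReal.ofReal (r / (r - p)) * ∫⁻ ω, ENNReal.ofReal (Y ω ^ p) ∂μ := by
  intro p hp hpr
  set EY := ∫⁻ ω, ENNReal.ofReal (Y ω ^ p) ∂μ
  have hconst : ENNReal.ofReal p * (ENNReal.ofReal (1 / (r - p)) * EY) + EY =
      ENNReal.ofReal (r / (r - p)) * EY := by
    have hrp : 0 < r - p := sub_pos.2 hpr
    rw [← mul_assoc, ← ENNReal.ofReal_mul hp.le, ← add_one_mul, ← ENNReal.ofReal_one,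
      ← ENNReal.ofReal_add (by positivity) zero_le_one]
    congr 2
    field_simp
    ring
  calc ∫⁻ ω, ENNReal.ofReal (X ω ^ p) ∂μ
      ≤ ENNReal.ofReal p *
          (∫⁻ t in Ioi 0, μ {ω | t < X ω ∧ Y ω < t} * ENNReal.ofReal (t ^ (p - 1))) + EY :=
        lintegral_rpow_le_lintegral_meas_lt_and_lt_add μ hX.aemeasurable hY.aemeasurable
          (ae_of_all _ hX0) (ae_of_all _ hY0) hp
    _ ≤ ENNReal.ofReal p * (ENNReal.ofReal (1 / (r - p)) * EY) + EY := by
        rw [← lintegral_Ioi_rpow_mul_setLIntegral_rpow_lt μ hY hY0 hp hpr]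
        gcongr ENNReal.ofReal p * ?_ + EY
        exact setLIntegral_mono' measurableSet_Ioi fun t ht => mul_le_mul_left (h t ht) _
    _ = ENNReal.ofReal (r / (r - p)) * EY := hconst

/-- Good-λ / interpolation-type inequality: if
`P(X > λ, Y < λ) ≤ λ^{-r} ∫_{Y < λ} Y^r dP` for all `λ > 0`, then for all
`0 < p < r`, `E[X^p] ≤ (r/(r-p)) E[Y^p]`. -/
theorem good_lambda_interpolation {Ω : Type*} [MeasurableSpace Ω] (μ : Measure Ω)
    [IsProbabilityMeasure μ]
    (X Y : Ω → ℝ) (hX : Measurable X) (hY : Measurable Y)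
    (hX0 : ∀ ω, 0 ≤ X ω) (hY0 : ∀ ω, 0 ≤ Y ω)
    (r : ℝ) (hr : 0 < r)
    (h : ∀ l : ℝ, 0 < l →
      μ {ω | l < X ω ∧ Y ω < l} ≤
        ENNReal.ofReal (l ^ (-r)) * ∫⁻ ω in {ω | Y ω < l}, ENNReal.ofReal (Y ω ^ r) ∂μ) :
    ∀ p : ℝ, 0 < p → p < r →
      ∫⁻ ω, ENNReal.ofReal (X ω ^ p) ∂μ ≤
        ENNReal.ofReal (r / (r - p)) * ∫⁻ ω, ENNReal.ofReal (Y ω ^ p) ∂μ :=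
  good_lambda_interpolation_general μ X Y hX hY hX0 hY0 r h
end

section
/- Let $\psi:\mathbb{R}\to\mathbb{C}$ with $\psi(0)=0$ and $\sqrt{|\psi|}$ subadditive, and set $\Psi^*(\ell) := \sup_{|\xi|\leq\ell}|\psi(\xi)|$. Then $\frac{1}{2}\frac{r^2}{1+r^2}\Psi^*(\ell) \leq \Psi^*(r\ell) \leq 2(1+r^2)\Psi^*(\ell)$ for all $r,\ell > 0$. -/
/-!
Subadditivity of `√|ψ|` gives `|ψ(nη)| ≤ n² |ψ(η)|`, hence `Ψ*(nℓ) ≤ n² Ψ*(ℓ)`. For real `r > 0`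
take `n = ⌈r⌉₊ < r + 1`, so `n² ≤ 2(1 + r²)`; this is the upper bound, and the lower bound is the
upper bound applied with `r⁻¹` at scale `rℓ`.
-/

open scoped ENNReal

theorem le_nat_mul_of_subadditive {M : Type*} [AddMonoid M] {f : M → ℝ}
    (hf : ∀ x y, f (x + y) ≤ f x + f y) (x : M) {n : ℕ} (hn : 0 < n) :
    f (n • x) ≤ n * f x := by
  induction n, hn using Nat.le_induction with
  | base => simp
  | succ n _ ih =>
    calc f ((n + 1) • x) ≤ f (n • x) + f x := by rw [succ_nsmul]; exact hf _ _
      _ ≤ n * f x + f x := by gcongr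
      _ = (n + 1 : ℕ) * f x := by push_cast; ring

namespace Complex

variable {ψ : ℝ → ℂ}

theorem norm_nat_mul_le_of_sqrt_subadditive
    (hsub : ∀ ξ η : ℝ, √‖ψ (ξ + η)‖ ≤ √‖ψ ξ‖ + √‖ψ η‖) (η : ℝ) {n : ℕ} (hn : 0 < n) :
    ‖ψ (n * η)‖ ≤ (n : ℝ) ^ 2 * ‖ψ η‖ := by
  have key := le_nat_mul_of_subadditive (f := fun ξ ↦ √‖ψ ξ‖) hsub η hn
  rw [nsmul_eq_mul, Real.sqrt_le_left (by positivity), mul_pow,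
    Real.sq_sqrt (norm_nonneg _)] at key
  exact key

end Complex

/-- The maximum function `Ψ*(ℓ) = sup_{|ξ| ≤ ℓ} |ψ(ξ)|`, valued in `ℝ≥0∞` so that it is always
defined. -/
noncomputable def maxFunction (ψ : ℝ → ℂ) (l : ℝ) : ℝ≥0∞ :=
  ⨆ ξ : ℝ, ⨆ _ : |ξ| ≤ l, ENNReal.ofReal ‖ψ ξ‖

namespace maxFunction

variable {ψ : ℝ → ℂ}

theorem ofReal_norm_le {ξ l : ℝ} (h : |ξ| ≤ l) : ENNReal.ofReal ‖ψ ξ‖ ≤ maxFunction ψ l :=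
  le_iSup₂_of_le ξ h le_rfl

theorem monotone : Monotone (maxFunction ψ) := fun _ _ hll' ↦
  iSup₂_le fun _ hξ ↦ ofReal_norm_le (hξ.trans hll')

variable (hsub : ∀ ξ η : ℝ, √‖ψ (ξ + η)‖ ≤ √‖ψ ξ‖ + √‖ψ η‖)
include hsub

theorem nat_mul_le {n : ℕ} (hn : 0 < n) (l : ℝ) :
    maxFunction ψ (n * l) ≤ ENNReal.ofReal ((n : ℝ) ^ 2) * maxFunction ψ l := by
  have hn' : (0 : ℝ) < n := by exact_mod_cast hn
  refine iSup₂_le fun ξ hξ ↦ ?_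
  have hξη : ξ = n * (ξ / n) := (mul_div_cancel₀ ξ hn'.ne').symm
  have hη : |ξ / n| ≤ l := by
    rwa [abs_div, abs_of_pos hn', div_le_iff₀ hn', mul_comm]
  calc ENNReal.ofReal ‖ψ ξ‖ ≤ ENNReal.ofReal ((n : ℝ) ^ 2 * ‖ψ (ξ / n)‖) := by
        have key := Complex.norm_nat_mul_le_of_sqrt_subadditive hsub (ξ / n) hn
        rw [← hξη] at key
        exact ENNReal.ofReal_le_ofReal key
    _ ≤ ENNReal.ofReal ((n : ℝ) ^ 2) * maxFunction ψ l := by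
        rw [ENNReal.ofReal_mul (by positivity)]
        gcongr
        exact ofReal_norm_le hη

theorem mul_le {r l : ℝ} (hr : 0 < r) (hl : 0 ≤ l) :
    maxFunction ψ (r * l) ≤ ENNReal.ofReal (2 * (1 + r ^ 2)) * maxFunction ψ l := by
  have hr_le := Nat.le_ceil r
  have hceil_lt := Nat.ceil_lt_add_one hr.le
  calc maxFunction ψ (r * l) ≤ maxFunction ψ (⌈r⌉₊ * l) := monotone (by gcongr)
    _ ≤ ENNReal.ofReal ((⌈r⌉₊ : ℝ) ^ 2) * maxFunction ψ l := nat_mul_le hsub (Nat.ceil_pos.2 hr) l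
    _ ≤ ENNReal.ofReal (2 * (1 + r ^ 2)) * maxFunction ψ l := by
        gcongr
        nlinarith [sq_nonneg (r - 1)]

theorem le_mul {r l : ℝ} (hr : 0 < r) (hl : 0 ≤ l) :
    ENNReal.ofReal (1 / 2 * (r ^ 2 / (1 + r ^ 2))) * maxFunction ψ l ≤ maxFunction ψ (r * l) := by
  have h := mul_le hsub (inv_pos.2 hr) (mul_nonneg hr.le hl)
  rw [inv_mul_cancel_left₀ hr.ne'] at h
  have hconst : 1 / 2 * (r ^ 2 / (1 + r ^ 2)) * (2 * (1 + r⁻¹ ^ 2)) = 1 := by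
    field_simp
    ring
  calc ENNReal.ofReal (1 / 2 * (r ^ 2 / (1 + r ^ 2))) * maxFunction ψ l
      ≤ ENNReal.ofReal (1 / 2 * (r ^ 2 / (1 + r ^ 2))) *
          (ENNReal.ofReal (2 * (1 + r⁻¹ ^ 2)) * maxFunction ψ (r * l)) := by gcongr
    _ = maxFunction ψ (r * l) := by
        rw [← mul_assoc, ← ENNReal.ofReal_mul (by positivity), hconst, ENNReal.ofReal_one, one_mul]

end maxFunction

theorem maximum_function_scaling_general (ψ : ℝ → ℂ)
    (hsub : ∀ ξ η : ℝ,
      Real.sqrt (‖ψ (ξ + η)‖) ≤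
        Real.sqrt (‖ψ ξ‖) + Real.sqrt (‖ψ η‖))
    (Ψ : ℝ → ℝ≥0∞)
    (hΨ : ∀ l : ℝ, Ψ l = ⨆ ξ : ℝ, ⨆ _ : |ξ| ≤ l, ENNReal.ofReal (‖ψ ξ‖)) :
    ∀ r l : ℝ, 0 < r → 0 < l →
      ENNReal.ofReal ((1 / 2) * (r ^ 2 / (1 + r ^ 2))) * Ψ l ≤ Ψ (r * l) ∧
      Ψ (r * l) ≤ ENNReal.ofReal (2 * (1 + r ^ 2)) * Ψ l := by
  obtain rfl : Ψ = maxFunction ψ := funext hΨ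
  intro r l hr hl
  exact ⟨maxFunction.le_mul hsub hr hl.le, maxFunction.mul_le hsub hr hl.le⟩

/-- For `ψ` with `ψ(0) = 0` and `√|ψ|` subadditive, the maximum function
`Ψ*(ℓ) = sup_{|ξ|≤ℓ} |ψ(ξ)|` satisfies
`(1/2) r²/(1+r²) Ψ*(ℓ) ≤ Ψ*(rℓ) ≤ 2 (1+r²) Ψ*(ℓ)` for all `r, ℓ > 0`. -/
theorem maximum_function_scaling (ψ : ℝ → ℂ) (hψ0 : ψ 0 = 0)
    (hsub : ∀ ξ η : ℝ,
      Real.sqrt (‖ψ (ξ + η)‖) ≤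
        Real.sqrt (‖ψ ξ‖) + Real.sqrt (‖ψ η‖))
    (Ψ : ℝ → ℝ≥0∞)
    (hΨ : ∀ l : ℝ, Ψ l = ⨆ ξ : ℝ, ⨆ _ : |ξ| ≤ l, ENNReal.ofReal (‖ψ ξ‖)) :
    ∀ r l : ℝ, 0 < r → 0 < l →
      ENNReal.ofReal ((1 / 2) * (r ^ 2 / (1 + r ^ 2))) * Ψ l ≤ Ψ (r * l) ∧
      Ψ (r * l) ≤ ENNReal.ofReal (2 * (1 + r ^ 2)) * Ψ l :=
  maximum_function_scaling_general ψ hsub Ψ hΨ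
end

section
/- (Khintchine inequality, lower bound) Let $(\xi_i)_{i=1}^n$ be independent Rademacher random variables and $(c_i)_{i=1}^n \subseteq \mathbb{R}$. Then for every $0 < p < \infty$ there is a constant $\gamma_p > 0$, depending only on $p$, such that $\gamma_p \left(\sum_{i=1}^n c_i^2\right)^{p/2} \leq \mathbb{E}\left[\left|\sum_{i=1}^n c_i\xi_i\right|^p\right]$. -/
open MeasureTheory
open scoped ENNReal

section Aux
variable {Ω : Type} [MeasurableSpace Ω] {μ : Measure Ω} [IsProbabilityMeasure μ]

lemma kl_integrable_of_bdd {f : Ω → ℝ} (hf : Measurable f) (C : ℝ)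
    (h : ∀ᵐ ω ∂μ, |f ω| ≤ C) : Integrable f μ :=
  (integrable_const C).mono' hf.aestronglyMeasurable
    (h.mono fun ω hω => by simpa [Real.norm_eq_abs] using hω)

lemma kl_rademacher_ae {ξ : Ω → ℝ}
    (hm : Measurable ξ) (h1 : μ {ω | ξ ω = 1} = 1/2) (h2 : μ {ω | ξ ω = -1} = 1/2) :
    ∀ᵐ ω ∂μ, ξ ω = 1 ∨ ξ ω = -1 := by
  have hA : MeasurableSet {ω | ξ ω = 1} := hm (measurableSet_singleton 1)
  have hB : MeasurableSet {ω | ξ ω = -1} := hm (measurableSet_singleton (-1))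
  have hdisj : Disjoint {ω | ξ ω = 1} {ω | ξ ω = -1} := by
    rw [Set.disjoint_left]
    intro ω hω1 hω2
    simp only [Set.mem_setOf_eq] at hω1 hω2
    rw [hω1] at hω2; norm_num at hω2
  have hAB : μ ({ω | ξ ω = 1} ∪ {ω | ξ ω = -1}) = 1 := by
    rw [measure_union hdisj hB, h1, h2, ENNReal.add_halves]
  have hcompl : μ ({ω | ξ ω = 1} ∪ {ω | ξ ω = -1})ᶜ = 0 := by
    rw [measure_compl (hA.union hB) (measure_ne_top μ _), hAB, measure_univ, tsub_self]
  have hmem : ({ω | ξ ω = 1} ∪ {ω | ξ ω = -1}) ∈ MeasureTheory.ae μ :=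
    MeasureTheory.mem_ae_iff.2 hcompl
  exact Filter.eventually_of_mem hmem fun ω hω => by simpa using hω

lemma kl_rademacher_moment {ξ : Ω → ℝ}
    (hm : Measurable ξ) (h1 : μ {ω | ξ ω = 1} = 1/2) (h2 : μ {ω | ξ ω = -1} = 1/2) (k : ℕ) :
    ∫ ω, (ξ ω) ^ k ∂μ = (1 + (-1 : ℝ)^k) / 2 := by
  have hA : MeasurableSet {ω | ξ ω = 1} := hm (measurableSet_singleton 1)
  have hB : MeasurableSet {ω | ξ ω = -1} := hm (measurableSet_singleton (-1))
  have hae := kl_rademacher_ae hm h1 h2 (μ := μ)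
  have heq : (fun ω => (ξ ω)^k) =ᵐ[μ]
      fun ω => {ω | ξ ω = 1}.indicator (fun _ => (1:ℝ)) ω
        + {ω | ξ ω = -1}.indicator (fun _ => (-1:ℝ)^k) ω := by
    filter_upwards [hae] with ω hω
    rcases hω with h | h
    · have hnB : ω ∉ {ω | ξ ω = -1} := by
        simp only [Set.mem_setOf_eq]; rw [h]; norm_num
      rw [Set.indicator_of_mem (by exact h) , Set.indicator_of_notMem hnB, h]
      simp
    · have hnA : ω ∉ {ω | ξ ω = 1} := by
        simp only [Set.mem_setOf_eq]; rw [h]; norm_num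
      rw [Set.indicator_of_notMem hnA, Set.indicator_of_mem (by exact h), h]
      simp
  rw [integral_congr_ae heq, integral_add, integral_indicator_const _ hA,
    integral_indicator_const _ hB, measureReal_def, measureReal_def, h1, h2]
  · show (1/2 : ℝ≥0∞).toReal • (1:ℝ) + (1/2 : ℝ≥0∞).toReal • ((-1:ℝ)^k) = _
    rw [ENNReal.toReal_div, ENNReal.toReal_one]
    norm_num
    ring
  · exact (integrable_const (1:ℝ)).indicator hA
  · exact (integrable_const ((-1:ℝ)^k)).indicator hB

end Aux

/-- Khintchine inequality, lower bound: for every `0 < p < ∞` there is a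
constant `γ_p > 0`, depending only on `p`, such that for all iid Rademacher
variables `ξ_i` and reals `c_i`,
`γ_p (∑ c_i²)^{p/2} ≤ E[|∑ c_i ξ_i|^p]`. -/
theorem khintchine_lower (p : ℝ) (hp : 0 < p) :
    ∃ γ : ℝ, 0 < γ ∧
      ∀ (Ω : Type) [MeasurableSpace Ω] (μ : Measure Ω), IsProbabilityMeasure μ →
        ∀ (n : ℕ) (ξ : Fin n → Ω → ℝ), (∀ i, Measurable (ξ i)) →
          ProbabilityTheory.iIndepFun ξ μ →
          (∀ i, μ {ω | ξ i ω = 1} = 1 / 2 ∧ μ {ω | ξ i ω = -1} = 1 / 2) →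
          ∀ c : Fin n → ℝ,
            ENNReal.ofReal (γ * (∑ i, c i ^ 2) ^ (p / 2)) ≤
              ∫⁻ ω, ENNReal.ofReal (|∑ i, c i * ξ i ω| ^ p) ∂μ := by
  have hp2 : (0:ℝ) < p / 2 := by positivity
  refine ⟨(1/2 : ℝ) ^ (p/2) * (1/12), by positivity, ?_⟩
  intro Ω _ μ hμ n ξ hmeas hindep hrad c
  classical
  set σ2 : ℝ := ∑ i, c i ^ 2 with hσ2def
  by_cases hσ : σ2 = 0
  · rw [hσ, Real.zero_rpow (ne_of_gt hp2), mul_zero, ENNReal.ofReal_zero]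
    exact zero_le
  have hσ2nonneg : 0 ≤ σ2 := Finset.sum_nonneg fun i _ => sq_nonneg _
  have hσpos : 0 < σ2 := lt_of_le_of_ne hσ2nonneg (Ne.symm hσ)
  -- basic objects
  set f : Fin n → Ω → ℝ := fun i ω => c i * ξ i ω with hfdef
  have hfm : ∀ i, Measurable (f i) := fun i => (hmeas i).const_mul (c i)
  have hindep' : ProbabilityTheory.iIndepFun f μ :=
    hindep.comp (fun i x => c i * x) (fun i => measurable_const_mul _)
  have haeξ : ∀ᵐ ω ∂μ, ∀ i, |ξ i ω| ≤ 1 := by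
    rw [MeasureTheory.ae_all_iff]
    intro i
    filter_upwards [kl_rademacher_ae (hmeas i) (hrad i).1 (hrad i).2] with ω hω
    rcases hω with h | h <;> rw [h] <;> norm_num
  have hfb : ∀ᵐ ω ∂μ, ∀ i, |f i ω| ≤ |c i| := by
    filter_upwards [haeξ] with ω hω i
    rw [hfdef]; dsimp only; rw [abs_mul]
    exact mul_le_of_le_one_right (abs_nonneg _) (hω i)
  have hmomf : ∀ (i : Fin n) (k : ℕ), ∫ ω, (f i ω)^k ∂μ = c i ^ k * ((1 + (-1:ℝ)^k)/2) := by
    intro i k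
    simp only [hfdef, mul_pow]
    rw [integral_const_mul, kl_rademacher_moment (hmeas i) (hrad i).1 (hrad i).2]
  set T : Finset (Fin n) → Ω → ℝ := fun s ω => ∑ i ∈ s, f i ω with hTdef
  have hTm : ∀ s, Measurable (T s) := fun s => Finset.measurable_sum s fun i _ => hfm i
  have hTb : ∀ s, ∀ᵐ ω ∂μ, |T s ω| ≤ ∑ i ∈ s, |c i| := by
    intro s
    filter_upwards [hfb] with ω hω
    calc |T s ω| ≤ ∑ i ∈ s, |f i ω| := Finset.abs_sum_le_sum_abs _ _
      _ ≤ ∑ i ∈ s, |c i| := Finset.sum_le_sum fun i _ => hω i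
  have hTint : ∀ (s : Finset (Fin n)) (k : ℕ), Integrable (fun ω => T s ω ^ k) μ := by
    intro s k
    apply kl_integrable_of_bdd ((hTm s).pow_const k) ((∑ i ∈ s, |c i|)^k)
    filter_upwards [hTb s] with ω hω
    rw [abs_pow]
    exact pow_le_pow_left₀ (abs_nonneg _) hω k
  have hfint : ∀ (a : Fin n) (k : ℕ), Integrable (fun ω => f a ω ^ k) μ := by
    intro a k
    apply kl_integrable_of_bdd ((hfm a).pow_const k) (|c a|^k)
    filter_upwards [hfb] with ω hω
    rw [abs_pow]
    exact pow_le_pow_left₀ (abs_nonneg _) (hω a) k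
  have hTfint : ∀ (s : Finset (Fin n)) (a : Fin n) (k m : ℕ),
      Integrable (fun ω => T s ω ^ k * f a ω ^ m) μ := by
    intro s a k m
    apply kl_integrable_of_bdd (((hTm s).pow_const k).mul ((hfm a).pow_const m))
      ((∑ i ∈ s, |c i|)^k * |c a|^m)
    filter_upwards [hTb s, hfb] with ω h1 h2
    simp only [Pi.mul_apply]; rw [abs_mul, abs_pow, abs_pow]
    exact mul_le_mul (pow_le_pow_left₀ (abs_nonneg _) h1 k)
      (pow_le_pow_left₀ (abs_nonneg _) (h2 a) m) (by positivity) (by positivity)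
  have hcross : ∀ (s : Finset (Fin n)) (a : Fin n), a ∉ s → ∀ (k m : ℕ),
      ∫ ω, T s ω ^ k * f a ω ^ m ∂μ
        = (∫ ω, T s ω ^ k ∂μ) * ∫ ω, f a ω ^ m ∂μ := by
    intro s a ha k m
    have hTs : T s = ∑ j ∈ s, f j := by
      funext ω; simp [hTdef]
    have hind : ProbabilityTheory.IndepFun (T s) (f a) μ := by
      rw [hTs]
      exact hindep'.indepFun_finsetSum_of_notMem hfm ha
    have hind2 : ProbabilityTheory.IndepFun
        (fun ω => T s ω ^ k) (fun ω => f a ω ^ m) μ :=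
      hind.comp (measurable_id.pow_const k) (measurable_id.pow_const m)
    exact hind2.integral_fun_mul_eq_mul_integral (hTint s k).1 (hfint a m).1
  -- second moment
  have h2 : ∀ s : Finset (Fin n), ∫ ω, (T s ω)^2 ∂μ = ∑ i ∈ s, c i ^ 2 := by
    intro s
    induction s using Finset.induction_on with
    | empty => simp [hTdef]
    | @insert a s' ha ih =>
      have he : (fun ω => (T (insert a s') ω)^2)
          = fun ω => T s' ω ^ 2 + (2 * (T s' ω ^ 1 * f a ω ^ 1) + f a ω ^ 2) := by
        funext ω
        rw [hTdef]; dsimp only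
        rw [Finset.sum_insert ha]
        show (f a ω + T s' ω)^2 = _
        ring
      have hi1 : Integrable (fun ω => 2 * (T s' ω ^ 1 * f a ω ^ 1)) μ :=
        (hTfint s' a 1 1).const_mul 2
      have hi2 : Integrable (fun ω => 2 * (T s' ω ^ 1 * f a ω ^ 1) + f a ω ^ 2) μ :=
        hi1.add (hfint a 2)
      rw [he, integral_add (hTint s' 2) hi2, integral_add hi1 (hfint a 2),
        integral_const_mul, hcross s' a ha 1 1, hmomf a 1, hmomf a 2, ih,
        Finset.sum_insert ha]
      ring
  -- fourth moment
  have h4 : ∀ s : Finset (Fin n), ∫ ω, (T s ω)^4 ∂μ ≤ 3 * (∑ i ∈ s, c i ^ 2)^2 := by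
    intro s
    induction s using Finset.induction_on with
    | empty => simp [hTdef]
    | @insert a s' ha ih =>
      have he : (fun ω => (T (insert a s') ω)^4)
          = fun ω => T s' ω ^ 4 + (4 * (T s' ω ^ 3 * f a ω ^ 1)
              + (6 * (T s' ω ^ 2 * f a ω ^ 2)
              + (4 * (T s' ω ^ 1 * f a ω ^ 3) + f a ω ^ 4))) := by
        funext ω
        rw [hTdef]; dsimp only
        rw [Finset.sum_insert ha]
        show (f a ω + T s' ω)^4 = _
        ring
      have hi31 : Integrable (fun ω => 4 * (T s' ω ^ 3 * f a ω ^ 1)) μ :=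
        (hTfint s' a 3 1).const_mul 4
      have hi22 : Integrable (fun ω => 6 * (T s' ω ^ 2 * f a ω ^ 2)) μ :=
        (hTfint s' a 2 2).const_mul 6
      have hi13 : Integrable (fun ω => 4 * (T s' ω ^ 1 * f a ω ^ 3)) μ :=
        (hTfint s' a 1 3).const_mul 4
      have hc : Integrable (fun ω => 4 * (T s' ω ^ 1 * f a ω ^ 3) + f a ω ^ 4) μ :=
        hi13.add (hfint a 4)
      have hb : Integrable (fun ω => 6 * (T s' ω ^ 2 * f a ω ^ 2)
          + (4 * (T s' ω ^ 1 * f a ω ^ 3) + f a ω ^ 4)) μ := hi22.add hc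
      have ha' : Integrable (fun ω => 4 * (T s' ω ^ 3 * f a ω ^ 1)
          + (6 * (T s' ω ^ 2 * f a ω ^ 2)
          + (4 * (T s' ω ^ 1 * f a ω ^ 3) + f a ω ^ 4))) μ := hi31.add hb
      rw [he, integral_add (hTint s' 4) ha', integral_add hi31 hb,
        integral_add hi22 hc, integral_add hi13 (hfint a 4),
        integral_const_mul, integral_const_mul, integral_const_mul,
        hcross s' a ha 3 1, hcross s' a ha 2 2, hcross s' a ha 1 3,
        hmomf a 1, hmomf a 2, hmomf a 3, hmomf a 4, h2 s', Finset.sum_insert ha]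
      have hA : (0:ℝ) ≤ ∑ i ∈ s', c i ^ 2 := Finset.sum_nonneg fun i _ => sq_nonneg _
      nlinarith [sq_nonneg (c a ^ 2), sq_nonneg (∑ i ∈ s', c i ^ 2), sq_nonneg (c a)]
  -- the sum S
  set S : Ω → ℝ := T Finset.univ with hSdef
  have hSm : Measurable S := hTm _
  have hS2 : ∫ ω, (S ω)^2 ∂μ = σ2 := h2 Finset.univ
  have hS4 : ∫ ω, (S ω)^4 ∂μ ≤ 3 * σ2^2 := h4 Finset.univ
  -- Paley-Zygmund set
  set A : Set Ω := {ω | σ2/2 ≤ (S ω)^2} with hAdef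
  have hAmeas : MeasurableSet A := measurableSet_le measurable_const (hSm.pow_const 2)
  have hptwise : ∀ ω, (S ω)^2 ≤ σ2/2 + 3*σ2 * A.indicator (fun _ => (1:ℝ)) ω
      + (S ω)^4 / (12*σ2) := by
    intro ω
    have hdivnn : 0 ≤ (S ω)^4 / (12*σ2) := by positivity
    by_cases hω : ω ∈ A
    · rw [Set.indicator_of_mem hω]
      have hdiv : (S ω)^4 / (12*σ2) * (12*σ2) = (S ω)^4 :=
        div_mul_cancel₀ _ (by positivity)
      nlinarith [sq_nonneg ((S ω)^2 - 6*σ2)]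
    · rw [Set.indicator_of_notMem hω]
      have : (S ω)^2 < σ2/2 := lt_of_not_ge hω
      linarith
  have hindint : Integrable (fun ω => 3*σ2 * A.indicator (fun _ => (1:ℝ)) ω) μ :=
    (((integrable_const (1:ℝ)).indicator hAmeas)).const_mul _
  have hi0 : Integrable (fun ω => σ2/2 + 3*σ2 * A.indicator (fun _ => (1:ℝ)) ω) μ :=
    (integrable_const _).add hindint
  have hi4 : Integrable (fun ω => (S ω)^4 / (12*σ2)) μ :=
    (hTint Finset.univ 4).div_const _
  have hintR : Integrable (fun ω => σ2/2 + 3*σ2 * A.indicator (fun _ => (1:ℝ)) ω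
      + (S ω)^4 / (12*σ2)) μ := hi0.add hi4
  have hAbig : (1:ℝ)/12 ≤ (μ A).toReal := by
    have hRint : ∫ ω, (σ2/2 + 3*σ2 * A.indicator (fun _ => (1:ℝ)) ω
        + (S ω)^4 / (12*σ2)) ∂μ
        = σ2/2 + 3*σ2 * (μ A).toReal + (∫ ω, (S ω)^4 ∂μ) / (12*σ2) := by
      rw [integral_add hi0 hi4, integral_add (integrable_const _) hindint,
        integral_const, integral_const_mul, integral_indicator_const _ hAmeas,
        integral_div]
      simp [measure_univ, smul_eq_mul, measureReal_def]
    have hmono : σ2 ≤ σ2/2 + 3*σ2 * (μ A).toReal + (∫ ω, (S ω)^4 ∂μ) / (12*σ2) := by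
      have h := integral_mono (hTint Finset.univ 2) hintR hptwise
      rw [hS2, hRint] at h
      exact h
    have h4' : (∫ ω, (S ω)^4 ∂μ) / (12*σ2) ≤ σ2/4 := by
      rw [div_le_iff₀ (by positivity)]
      nlinarith
    nlinarith [hσpos]
  -- conclusion
  have hmeasInt : Measurable fun ω => ENNReal.ofReal (|S ω| ^ p) :=
    ENNReal.measurable_ofReal.comp (hSm.abs.pow measurable_const)
  have hkey : ENNReal.ofReal ((σ2/2)^(p/2)) * μ A
      ≤ ∫⁻ ω, ENNReal.ofReal (|S ω| ^ p) ∂μ := by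
    calc ENNReal.ofReal ((σ2/2)^(p/2)) * μ A
        = ∫⁻ _ω in A, ENNReal.ofReal ((σ2/2)^(p/2)) ∂μ := (setLIntegral_const _ _).symm
      _ ≤ ∫⁻ ω in A, ENNReal.ofReal (|S ω| ^ p) ∂μ := by
          apply setLIntegral_mono hmeasInt
          intro ω hω
          apply ENNReal.ofReal_le_ofReal
          have habs : ((S ω)^2 : ℝ)^(p/2) = |S ω|^p := by
            rw [← sq_abs, ← Real.rpow_natCast |S ω| 2, ← Real.rpow_mul (abs_nonneg _)]
            congr 1
            push_cast
            ring
          rw [← habs]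
          exact Real.rpow_le_rpow (by positivity) hω (le_of_lt hp2)
      _ ≤ ∫⁻ ω, ENNReal.ofReal (|S ω| ^ p) ∂μ := setLIntegral_le_lintegral _ _
  have hμA : ENNReal.ofReal ((1:ℝ)/12) ≤ μ A := ENNReal.ofReal_le_of_le_toReal hAbig
  have hSeq : ∀ ω, (∑ i, c i * ξ i ω) = S ω := fun ω => rfl
  calc ENNReal.ofReal ((1/2 : ℝ) ^ (p/2) * (1/12) * σ2 ^ (p/2))
      = ENNReal.ofReal ((σ2/2)^(p/2)) * ENNReal.ofReal ((1:ℝ)/12) := by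
        rw [← ENNReal.ofReal_mul (by positivity)]
        congr 1
        rw [div_eq_mul_inv σ2 2, Real.mul_rpow hσ2nonneg (by norm_num)]
        rw [show ((2:ℝ)⁻¹ = 1/2) by norm_num]
        ring
    _ ≤ ENNReal.ofReal ((σ2/2)^(p/2)) * μ A := mul_le_mul_right hμA _
    _ ≤ ∫⁻ ω, ENNReal.ofReal (|S ω| ^ p) ∂μ := hkey
    _ = ∫⁻ ω, ENNReal.ofReal (|∑ i, c i * ξ i ω| ^ p) ∂μ := by
        simp only [hSeq]
end
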